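/- arXiv:math/9712279 — 2 statements merged into one kernel-verified Lean document; each statement's English description precedes it below -/
import Mathlib

section
/- If a positive scalar weight w on the unit circle satisfies limsup over arcs I with |I|→0 of (w_I)·((w^{-1})_I) = 1, then log w ∈ VMO(𝕋), i.e. the mean oscillation (1/|I|)∫_I |log w - (log w)_I| dm tends to 0 as |I| → 0. -/
open MeasureTheory Real Filter
open scoped ComplexOrder

/-- Average of a scalar function over the arc of length `ℓ` starting at `a`. -/
noncomputable def avg (f : ℝ → ℝ) (a ℓ : ℝ) : ℝ := (∫ t in a..(a + ℓ), f t) / ℓ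

/-- Entrywise average of a matrix-valued function over the arc `[a, a+ℓ]`. -/
noncomputable def mavg {d : ℕ} (W : ℝ → Matrix (Fin d) (Fin d) ℂ) (a ℓ : ℝ) :
    Matrix (Fin d) (Fin d) ℂ :=
  Matrix.of fun i j => (∫ t in a..(a + ℓ), W t i j) / (ℓ : ℂ)

/-- Poisson kernel of the unit disk at `l ∈ 𝔻`, evaluated at `e^{it}`. -/
noncomputable def poissonKer (l : ℂ) (t : ℝ) : ℝ :=
  (1 - ‖l‖ ^ 2) / ‖(1 - (starRingEnd ℂ) l * Complex.exp (t * Complex.I))‖ ^ 2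

/-- Harmonic (Poisson) extension of a scalar function on the circle at `l ∈ 𝔻`. -/
noncomputable def pext (f : ℝ → ℝ) (l : ℂ) : ℝ :=
  (2 * π)⁻¹ * ∫ t in (0:ℝ)..(2 * π), f t * poissonKer l t

/-- Entrywise harmonic (Poisson) extension of a matrix-valued function. -/
noncomputable def mpext {d : ℕ} (W : ℝ → Matrix (Fin d) (Fin d) ℂ) (l : ℂ) :
    Matrix (Fin d) (Fin d) ℂ :=
  Matrix.of fun i j => (2 * π : ℂ)⁻¹ * ∫ t in (0:ℝ)..(2 * π), W t i j * (poissonKer l t : ℂ)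

/-- Operator (`ℓ² → ℓ²`) norm of a matrix. -/
noncomputable def opNorm {d : ℕ} (A : Matrix (Fin d) (Fin d) ℂ) : ℝ :=
  ‖(Matrix.toEuclideanCLM (𝕜 := ℂ) A : EuclideanSpace ℂ (Fin d) →L[ℂ] EuclideanSpace ℂ (Fin d))‖

/-- Real part of the quadratic form `⟨A e, e⟩`. -/
noncomputable def qf {d : ℕ} (A : Matrix (Fin d) (Fin d) ℂ) (e : Fin d → ℂ) : ℝ :=
  (dotProduct (star e) (A.mulVec e)).re

/-- The filter of arcs `(a, ℓ)` (left endpoint, length) with `ℓ → 0⁺`. -/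
def arcFilter : Filter (ℝ × ℝ) := Filter.comap Prod.snd (nhdsWithin 0 (Set.Ioi 0))

/-- The filter of points of the open unit disk with `|λ| → 1`. -/
noncomputable def bdyFilter : Filter ℂ :=
  Filter.comap (fun z : ℂ => ‖z‖) (nhdsWithin 1 (Set.Iio 1)) ⊓ Filter.principal {z | ‖z‖ < 1}

/-- `φ` has vanishing mean oscillation: the mean oscillation over arcs tends to `0`
uniformly as the length of the arc tends to `0`. -/
def IsVMO (φ : ℝ → ℝ) : Prop :=
  Filter.Tendsto (fun p : ℝ × ℝ => avg (fun t => |φ t - avg φ p.1 p.2|) p.1 p.2)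
    arcFilter (nhds 0)



lemma limsup_extract {α : Type*} {F : Filter α} {u : α → ℝ} (h : Filter.limsup u F = 1)
    {ε : ℝ} (hε : 0 < ε) : ∀ᶠ x in F, u x < 1 + ε := by
  rw [Filter.limsup_eq] at h
  set S := {a : ℝ | ∀ᶠ x in F, u x ≤ a} with hSdef
  by_cases hne : S.Nonempty
  · by_cases hbd : BddBelow S
    · have hlt : sInf S < 1 + ε := by rw [h]; linarith
      obtain ⟨b, hb, hblt⟩ := (csInf_lt_iff hbd hne).1 hlt
      exact hb.mono fun x hx => lt_of_le_of_lt hx hblt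
    · rw [Real.sInf_of_not_bddBelow hbd] at h; norm_num at h
  · rw [Set.not_nonempty_iff_eq_empty] at hne
    rw [hne, Real.sInf_empty] at h; norm_num at h

lemma coshSqBd_aux {y : ℝ} (hy : 0 ≤ y) : y^2/2 ≤ Real.exp y + Real.exp (-y) - 2 := by
  have h1 := Real.sum_le_exp_of_nonneg hy 3
  have h2 := Real.add_one_le_exp (-y)
  norm_num [Finset.sum_range_succ, Nat.factorial] at h1
  linarith

lemma coshSqBd (x : ℝ) : x^2/2 ≤ Real.exp x + Real.exp (-x) - 2 := by
  rcases le_total 0 x with h | h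
  · exact coshSqBd_aux h
  · have h2 := coshSqBd_aux (neg_nonneg.2 h)
    rw [neg_neg, neg_sq] at h2; linarith

lemma ptwise {ε : ℝ} (hε : 0 < ε) (x : ℝ) :
    |x| ≤ ε + (2/ε) * (Real.exp x + Real.exp (-x) - 2) := by
  have hG := coshSqBd x
  have hsq : x^2 = |x|^2 := (sq_abs x).symm
  rcases le_total (|x|) ε with h | h
  · have h0 : 0 ≤ (2/ε) * (Real.exp x + Real.exp (-x) - 2) := by
      apply mul_nonneg (by positivity); nlinarith [sq_nonneg x]
    linarith
  · have h1 : |x| * ε ≤ x^2 := by nlinarith [abs_nonneg x]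
    have h2 : (2/ε) * (x^2/2) ≤ (2/ε)*(Real.exp x + Real.exp (-x) - 2) :=
      mul_le_mul_of_nonneg_left hG (by positivity)
    have h4 : |x| ≤ x^2/ε := (le_div_iff₀ hε).2 h1
    have h3 : (2/ε) * (x^2/2) = x^2/ε := by ring
    linarith

lemma logw_ii (w : ℝ → ℝ) (hpos : ∀ t, 0 < w t) {a b : ℝ}
    (hwi : IntervalIntegrable w volume a b)
    (hwinv : IntervalIntegrable (fun t => (w t)⁻¹) volume a b) :
    IntervalIntegrable (fun t => Real.log (w t)) volume a b := by
  have hsum : IntervalIntegrable (fun t => w t + (w t)⁻¹) volume a b := hwi.add hwinv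
  apply hsum.mono_fun' ?_ ?_
  · have hw : AEMeasurable w (volume.restrict (Set.uIoc a b)) := hwi.def'.aemeasurable
    exact (Real.measurable_log.comp_aemeasurable hw).aestronglyMeasurable
  · refine Filter.Eventually.of_forall fun t => ?_
    have h1 := hpos t
    have h2 : 0 < (w t)⁻¹ := inv_pos.2 h1
    have h3 := Real.log_le_sub_one_of_pos h1
    have h4 := Real.log_le_sub_one_of_pos h2
    rw [Real.log_inv] at h4
    simp only [Real.norm_eq_abs, abs_le]
    constructor <;> linarith

lemma arc_bound (w : ℝ → ℝ) (hpos : ∀ t, 0 < w t)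
    (hwi : ∀ a b : ℝ, IntervalIntegrable w volume a b)
    (hwinv : ∀ a b : ℝ, IntervalIntegrable (fun t => (w t)⁻¹) volume a b)
    {a ℓ ε : ℝ} (hℓ : 0 < ℓ) (hε : 0 < ε) :
    avg (fun t => |Real.log (w t) - avg (fun t => Real.log (w t)) a ℓ|) a ℓ
      ≤ 2*ε + (4/ε) * (avg w a ℓ * avg (fun t => (w t)⁻¹) a ℓ - 1) := by
  unfold avg
  set b := a + ℓ with hbdef
  have hab : a < b := lt_add_of_pos_right a hℓ
  have hℓne : ℓ ≠ 0 := ne_of_gt hℓ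
  have hb' : b - a = ℓ := by rw [hbdef]; ring
  have hL : IntervalIntegrable (fun t => Real.log (w t)) volume a b :=
    logw_ii w hpos (hwi a b) (hwinv a b)
  have hIw : 0 < ∫ t in a..b, w t :=
    intervalIntegral.intervalIntegral_pos_of_pos (hwi a b) hpos hab
  set A : ℝ := (∫ t in a..b, w t) / ℓ with hAdef
  set B : ℝ := (∫ t in a..b, (w t)⁻¹) / ℓ with hBdef
  set IL : ℝ := ∫ t in a..b, Real.log (w t) with hILdef
  have hA : 0 < A := div_pos hIw hℓ
  have hAne : A ≠ 0 := ne_of_gt hA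
  set c : ℝ := Real.log A with hcdef
  -- pointwise bound
  have hpt : ∀ t, |Real.log (w t) - c| ≤
      (ε - 4/ε) + ((2/ε) * A⁻¹) * w t + ((2/ε) * A) * (w t)⁻¹ := by
    intro t
    have h := ptwise hε (Real.log (w t) - c)
    have e1 : Real.exp (Real.log (w t) - c) = w t * A⁻¹ := by
      rw [Real.exp_sub, Real.exp_log (hpos t), hcdef, Real.exp_log hA, div_eq_mul_inv]
    have e2 : Real.exp (-(Real.log (w t) - c)) = A * (w t)⁻¹ := by
      rw [neg_sub, Real.exp_sub, hcdef, Real.exp_log hA, Real.exp_log (hpos t), div_eq_mul_inv]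
    rw [e1, e2] at h
    calc |Real.log (w t) - c| ≤ ε + (2/ε) * (w t * A⁻¹ + A * (w t)⁻¹ - 2) := h
      _ = (ε - 4/ε) + ((2/ε) * A⁻¹) * w t + ((2/ε) * A) * (w t)⁻¹ := by ring
  have hg : IntervalIntegrable
      (fun t => (ε - 4/ε) + ((2/ε) * A⁻¹) * w t + ((2/ε) * A) * (w t)⁻¹) volume a b :=
    (intervalIntegrable_const.add ((hwi a b).const_mul _)).add ((hwinv a b).const_mul _)
  have hIg : (∫ t in a..b, ((ε - 4/ε) + ((2/ε) * A⁻¹) * w t + ((2/ε) * A) * (w t)⁻¹))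
      = (ε + (2/ε) * (A*B - 1)) * ℓ := by
    rw [intervalIntegral.integral_add (intervalIntegrable_const.add ((hwi a b).const_mul _))
        ((hwinv a b).const_mul _),
      intervalIntegral.integral_add intervalIntegrable_const ((hwi a b).const_mul _),
      intervalIntegral.integral_const_mul, intervalIntegral.integral_const_mul,
      intervalIntegral.integral_const, hb', smul_eq_mul]
    have h1 : (∫ t in a..b, w t) = A * ℓ := by rw [hAdef, div_mul_cancel₀ _ hℓne]
    have h2 : (∫ t in a..b, (w t)⁻¹) = B * ℓ := by rw [hBdef, div_mul_cancel₀ _ hℓne]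
    rw [h1, h2]
    field_simp
    ring
  have hψa : IntervalIntegrable (fun t => |Real.log (w t) - c|) volume a b :=
    (hL.sub intervalIntegrable_const).abs
  have h5 : (∫ t in a..b, |Real.log (w t) - c|) ≤ (ε + (2/ε) * (A*B - 1)) * ℓ := by
    rw [← hIg]
    exact intervalIntegral.integral_mono_on hab.le hψa hg (fun t _ => hpt t)
  have hIψ : (∫ t in a..b, (Real.log (w t) - c)) = IL - c * ℓ := by
    rw [intervalIntegral.integral_sub hL intervalIntegrable_const,
      intervalIntegral.integral_const, hb', smul_eq_mul, hILdef, mul_comm]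
  have h6 : |IL - c * ℓ| ≤ (ε + (2/ε) * (A*B - 1)) * ℓ := by
    rw [← hIψ]
    calc |∫ t in a..b, (Real.log (w t) - c)| ≤ ∫ t in a..b, |Real.log (w t) - c| :=
          intervalIntegral.abs_integral_le_integral_abs hab.le
      _ ≤ _ := h5
  have h9 : |c - IL/ℓ| * ℓ = |IL - c * ℓ| := by
    have he : IL - c * ℓ = (c - IL/ℓ) * (-ℓ) := by field_simp; ring
    rw [he, abs_mul, abs_neg, abs_of_pos hℓ]
  have h7 : (∫ t in a..b, |Real.log (w t) - IL/ℓ|) ≤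
      (∫ t in a..b, (|Real.log (w t) - c| + |c - IL/ℓ|)) :=
    intervalIntegral.integral_mono_on hab.le ((hL.sub intervalIntegrable_const).abs)
      (hψa.add intervalIntegrable_const) (fun t _ => abs_sub_le _ _ _)
  have h8 : (∫ t in a..b, (|Real.log (w t) - c| + |c - IL/ℓ|))
      = (∫ t in a..b, |Real.log (w t) - c|) + |c - IL/ℓ| * ℓ := by
    rw [intervalIntegral.integral_add hψa intervalIntegrable_const,
      intervalIntegral.integral_const, hb', smul_eq_mul, mul_comm]
  rw [div_le_iff₀ hℓ]
  calc (∫ t in a..b, |Real.log (w t) - IL/ℓ|)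
      ≤ (∫ t in a..b, |Real.log (w t) - c|) + |c - IL/ℓ| * ℓ := h7.trans (le_of_eq h8)
    _ = (∫ t in a..b, |Real.log (w t) - c|) + |IL - c * ℓ| := by rw [h9]
    _ ≤ (ε + (2/ε) * (A*B - 1)) * ℓ + (ε + (2/ε) * (A*B - 1)) * ℓ := add_le_add h5 h6
    _ = (2*ε + 4/ε * (A*B - 1)) * ℓ := by ring

/-- if `limsup_{|I|→0} w_I (w⁻¹)_I = 1` then `log w ∈ VMO`. -/
theorem stmt3 (w : ℝ → ℝ)
    (hpos : ∀ t, 0 < w t)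
    (hper : Function.Periodic w (2 * π))
    (hwi : ∀ a b : ℝ, IntervalIntegrable w volume a b)
    (hwinv : ∀ a b : ℝ, IntervalIntegrable (fun t => (w t)⁻¹) volume a b)
    (hlim : Filter.limsup
        (fun p : ℝ × ℝ => avg w p.1 p.2 * avg (fun t => (w t)⁻¹) p.1 p.2) arcFilter = 1) :
    IsVMO (fun t => Real.log (w t)) := by
  have harc : ∀ᶠ p : ℝ × ℝ in arcFilter, 0 < p.2 :=
    Filter.preimage_mem_comap (self_mem_nhdsWithin)
  unfold IsVMO
  rw [Metric.tendsto_nhds]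
  intro η hη
  set ε := η/8 with hεdef
  have hε : 0 < ε := by positivity
  have hδ : (0:ℝ) < ε^2/4 := by positivity
  have hev := limsup_extract hlim hδ
  filter_upwards [hev, harc] with p hP hp2
  have hb := arc_bound w hpos hwi hwinv (a := p.1) hp2 hε
  have hnn : 0 ≤ avg (fun t => |Real.log (w t) - avg (fun t => Real.log (w t)) p.1 p.2|) p.1 p.2 := by
    unfold avg
    exact div_nonneg
      (intervalIntegral.integral_nonneg (by linarith) (fun u _ => abs_nonneg _)) hp2.le
  show dist (avg (fun t => |Real.log (w t) - avg (fun t => Real.log (w t)) p.1 p.2|) p.1 p.2) 0 < η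
  rw [Real.dist_eq, sub_zero, abs_of_nonneg hnn]
  have hc : (4/ε) * (avg w p.1 p.2 * avg (fun t => (w t)⁻¹) p.1 p.2 - 1) ≤ (4/ε) * (ε^2/4) :=
    mul_le_mul_of_nonneg_left (by linarith) (by positivity)
  have hc2 : (4/ε) * (ε^2/4) = ε := by field_simp
  calc avg (fun t => |Real.log (w t) - avg (fun t => Real.log (w t)) p.1 p.2|) p.1 p.2
      ≤ 2*ε + (4/ε) * (avg w p.1 p.2 * avg (fun t => (w t)⁻¹) p.1 p.2 - 1) := hb
    _ ≤ 2*ε + ε := by linarith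
    _ < η := by rw [hεdef]; linarith
end

section
/- Let W be a smooth function on a domain in ℝⁿ, harmonic in each entry, with values in strictly positive definite Hermitian d×d matrices. Then Δ(log det W) = -Σ_{j=1}^n trace((W^{-1/2} ∂W/∂x_j W^{-1/2})²). -/
open MeasureTheory Real Filter
open scoped ComplexOrder

/-- Second partial derivative of a scalar function on `ℝⁿ` in coordinate direction `j`. -/
noncomputable def pderiv2 {n : ℕ} (f : EuclideanSpace ℝ (Fin n) → ℝ)
    (x : EuclideanSpace ℝ (Fin n)) (j : Fin n) : ℝ :=
  fderiv ℝ (fun y => fderiv ℝ f y (EuclideanSpace.single j (1:ℝ))) x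
    (EuclideanSpace.single j (1:ℝ))

/-- Second partial derivative of a complex-valued function in direction `j`. -/
noncomputable def pderiv2C {n : ℕ} (f : EuclideanSpace ℝ (Fin n) → ℂ)
    (x : EuclideanSpace ℝ (Fin n)) (j : Fin n) : ℂ :=
  fderiv ℝ (fun y => fderiv ℝ f y (EuclideanSpace.single j (1:ℝ))) x
    (EuclideanSpace.single j (1:ℝ))

/-- Laplacian of a scalar function on `ℝⁿ`. -/
noncomputable def lap {n : ℕ} (f : EuclideanSpace ℝ (Fin n) → ℝ)
    (x : EuclideanSpace ℝ (Fin n)) : ℝ := ∑ j, pderiv2 f x j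

/-- Entrywise partial derivative of a matrix-valued function in direction `j`. -/
noncomputable def mpderiv {n d : ℕ} (W : EuclideanSpace ℝ (Fin n) → Matrix (Fin d) (Fin d) ℂ)
    (x : EuclideanSpace ℝ (Fin n)) (j : Fin n) : Matrix (Fin d) (Fin d) ℂ :=
  Matrix.of fun i k => fderiv ℝ (fun y => W y i k) x (EuclideanSpace.single j (1:ℝ))

open Topology
section Helpers
variable {E : Type*} [NormedAddCommGroup E] [NormedSpace ℝ E] {d : ℕ}

lemma det_differentiableAt {M : E → Matrix (Fin d) (Fin d) ℂ} {x : E}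
    (h : ∀ i k, DifferentiableAt ℝ (fun y => M y i k) x) :
    DifferentiableAt ℝ (fun y => (M y).det) x := by
  classical
  have hrw : (fun y => (M y).det)
      = fun y => ∑ σ : Equiv.Perm (Fin d),
          ((Equiv.Perm.sign σ : ℤ) : ℂ) * ∏ i, M y (σ i) i := by
    funext y; rw [Matrix.det_apply']
  rw [hrw]
  refine DifferentiableAt.fun_sum fun σ _ => ?_
  have hp : DifferentiableAt ℝ (fun y => ∏ i, M y (σ i) i) x :=
    (HasFDerivAt.finset_prod (g := fun i y => M y (σ i) i)
      fun i _ => (h (σ i) i).hasFDerivAt).differentiableAt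
  exact hp.const_mul _

lemma hasFDerivAt_det_one {V : E → Matrix (Fin d) (Fin d) ℂ} {x : E}
    {L : Fin d → Fin d → (E →L[ℝ] ℂ)}
    (hL : ∀ i k, HasFDerivAt (fun y => V y i k) (L i k) x)
    (hV : V x = 1) :
    HasFDerivAt (fun y => (V y).det) (∑ i, L i i) x := by
  classical
  have hrw : (fun y => (V y).det)
      = fun y => ∑ σ : Equiv.Perm (Fin d),
          ((Equiv.Perm.sign σ : ℤ) : ℂ) * ∏ i, V y (σ i) i := by
    funext y; rw [Matrix.det_apply']
  rw [hrw]
  have key : ∀ σ : Equiv.Perm (Fin d),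
      HasFDerivAt (fun y => ((Equiv.Perm.sign σ : ℤ) : ℂ) * ∏ i, V y (σ i) i)
        (((Equiv.Perm.sign σ : ℤ) : ℂ) •
          ∑ i, (∏ k ∈ Finset.univ.erase i, V x (σ k) k) • L (σ i) i) x := fun σ =>
    (HasFDerivAt.finset_prod fun i _ => hL (σ i) i).const_mul _
  have := HasFDerivAt.fun_sum (fun σ (_ : σ ∈ Finset.univ) => key σ)
  convert this using 1
  case e'_8 => rfl
  rw [Finset.sum_eq_single (1 : Equiv.Perm (Fin d))]
  · simp only [Equiv.Perm.sign_one, Units.val_one, Int.cast_one, one_smul, Equiv.Perm.one_apply]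
    congr 1
    funext i
    rw [Finset.prod_eq_one, one_smul]
    intro k hk
    rw [hV]
    simp [Matrix.one_apply]
  · intro σ _ hσ
    have hex : ∀ i : Fin d, ∃ k ∈ Finset.univ.erase i, V x (σ k) k = 0 := by
      intro i
      obtain ⟨a, ha⟩ : ∃ a, σ a ≠ a := by
        by_contra hc
        push_neg at hc
        exact hσ (Equiv.ext fun b => hc b)
      have ha2 : σ (σ a) ≠ σ a := fun hfix => ha (σ.injective hfix)
      rcases eq_or_ne a i with rfl | hne
      · exact ⟨σ a, Finset.mem_erase.2 ⟨ha, Finset.mem_univ _⟩,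
          by rw [hV]; simp [Matrix.one_apply, ha2]⟩
      · exact ⟨a, Finset.mem_erase.2 ⟨hne, Finset.mem_univ _⟩,
          by rw [hV]; simp [Matrix.one_apply, ha]⟩
    have hz0 : ∀ i : Fin d, (∏ k ∈ Finset.univ.erase i, V x (σ k) k) = 0 := by
      intro i
      obtain ⟨k, hk, hk0⟩ := hex i
      exact Finset.prod_eq_zero hk hk0
    have hz : ∀ i : Fin d, (∏ k ∈ Finset.univ.erase i, V x (σ k) k) • L (σ i) i = 0 :=
      fun i => by rw [hz0 i]; exact zero_smul ℂ (L (σ i) i)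
    rw [Finset.sum_congr rfl fun i _ => hz i, Finset.sum_const_zero, smul_zero]
  · simp

lemma det_hasFDerivAt_of_invertible {W : E → Matrix (Fin d) (Fin d) ℂ} {x : E}
    {L : Fin d → Fin d → (E →L[ℝ] ℂ)}
    (hL : ∀ i k, HasFDerivAt (fun y => W y i k) (L i k) x)
    (hdet : (W x).det ≠ 0) :
    HasFDerivAt (fun y => (W y).det)
      ((W x).det • ∑ i, ∑ m, ((W x)⁻¹ i m) • L m i) x := by
  classical
  set A := (W x)⁻¹ with hA
  have hunit : IsUnit (W x).det := hdet.isUnit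
  have hV : ∀ i k, HasFDerivAt (fun y => (A * W y) i k) (∑ m, A i m • L m k) x := by
    intro i k
    have hfn : (fun y => (A * W y) i k) = fun y => ∑ m, A i m * W y m k := by
      funext y; rw [Matrix.mul_apply]
    rw [hfn]
    exact HasFDerivAt.fun_sum fun m _ => (hL m k).const_mul (A i m)
  have h1 : HasFDerivAt (fun y => (A * W y).det) (∑ i, ∑ m, A i m • L m i) x :=
    hasFDerivAt_det_one hV (Matrix.nonsing_inv_mul _ hunit)
  have h2 : (fun y => (W y).det) = fun y => (W x).det * (A * W y).det := by
    funext y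
    rw [Matrix.det_mul, hA, Matrix.det_nonsing_inv, Ring.inverse_eq_inv]
    field_simp
  rw [h2]
  exact h1.const_mul _

end Helpers

set_option maxHeartbeats 2000000 in
/-- for a matrix-valued harmonic function `W` with positive definite
values, `Δ(log det W) = -Σⱼ trace((W^{-1/2} ∂ⱼW W^{-1/2})²)`. -/
theorem stmt12 {n d : ℕ} (Ω : Set (EuclideanSpace ℝ (Fin n))) (hΩ : IsOpen Ω)
    (W : EuclideanSpace ℝ (Fin n) → Matrix (Fin d) (Fin d) ℂ)
    (hpos : ∀ x ∈ Ω, (W x).PosDef)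
    (hsmooth : ∀ i k : Fin d, ContDiffOn ℝ (⊤ : ℕ∞) (fun y => W y i k) Ω)
    (hharm : ∀ x ∈ Ω, ∀ i k : Fin d, ∑ j, pderiv2C (fun y => W y i k) x j = 0)
    (R : EuclideanSpace ℝ (Fin n) → Matrix (Fin d) (Fin d) ℂ)
    (hR : ∀ x ∈ Ω, (R x).PosSemidef ∧ R x * R x = (W x)⁻¹) :
    ∀ x ∈ Ω,
      lap (fun y => Real.log ((W y).det.re)) x =
        -(∑ j, ((R x * mpderiv W x j * R x) * (R x * mpderiv W x j * R x)).trace).re := by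
  classical
  intro x hx
  have hnhds : Ω ∈ 𝓝 x := hΩ.mem_nhds hx
  -- basic differentiability of entries
  have hWdiff : ∀ y ∈ Ω, ∀ i k : Fin d, DifferentiableAt ℝ (fun z => W z i k) y := by
    intro y hy i k
    exact ((hsmooth i k).contDiffAt (hΩ.mem_nhds hy)).differentiableAt (by simp)
  -- determinant facts
  have hdetpos : ∀ y ∈ Ω, 0 < ((W y).det).re ∧ ((W y).det).im = 0 := by
    intro y hy
    have h := (hpos y hy).det_pos
    rw [Complex.lt_def] at h
    constructor
    · simpa using h.1
    · simpa using h.2.symm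
  have hdetne : ∀ y ∈ Ω, (W y).det ≠ 0 := by
    intro y hy hc
    have := (hdetpos y hy).1
    rw [hc] at this
    simp at this
  -- inverse entries are differentiable
  have hAdiff : ∀ y ∈ Ω, ∀ i k : Fin d, DifferentiableAt ℝ (fun z => (W z)⁻¹ i k) y := by
    intro y hy i k
    have hadj : DifferentiableAt ℝ (fun z => (W z).adjugate i k) y := by
      have hfun : (fun z => (W z).adjugate i k)
          = fun z => ((W z).updateRow k (Pi.single i 1)).det := by
        funext z; rw [Matrix.adjugate_apply]
      rw [hfun]
      refine det_differentiableAt fun a b => ?_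
      have : (fun z => ((W z).updateRow k (Pi.single i 1)) a b)
          = fun z => if a = k then (Pi.single i 1 : Fin d → ℂ) b else W z a b := by
        funext z; rw [Matrix.updateRow_apply]
      rw [this]
      rcases eq_or_ne a k with rfl | hne
      · simpa using differentiableAt_const _
      · simpa [hne] using hWdiff y hy a b
    have hdd : DifferentiableAt ℝ (fun z => (W z).det) y :=
      det_differentiableAt fun a b => hWdiff y hy a b
    have hrepr : (fun z => (W z)⁻¹ i k)
        =ᶠ[𝓝 y] fun z => ((W z).det)⁻¹ * (W z).adjugate i k := by
      filter_upwards [] with z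
      rw [Matrix.inv_def, Ring.inverse_eq_inv]
      simp [Matrix.smul_apply, smul_eq_mul]
    rw [hrepr.differentiableAt_iff]
    exact (hdd.inv (hdetne y hy)).mul hadj
  -- Jacobi formula: derivative of the determinant
  have hJac : ∀ y ∈ Ω, HasFDerivAt (fun z => (W z).det)
      ((W y).det • ∑ i, ∑ m, ((W y)⁻¹ i m) • fderiv ℝ (fun z => W z m i) y) y := by
    intro y hy
    exact det_hasFDerivAt_of_invertible
      (fun i k => (hWdiff y hy i k).hasFDerivAt) (hdetne y hy)
  -- first derivative of log det
  have hlogder : ∀ y ∈ Ω, ∀ j : Fin n,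
      fderiv ℝ (fun z => Real.log ((W z).det.re)) y (EuclideanSpace.single j (1:ℝ))
        = (((W y)⁻¹ * mpderiv W y j).trace).re := by
    intro y hy j
    have hD := hJac y hy
    set K : EuclideanSpace ℝ (Fin n) →L[ℝ] ℂ :=
      (W y).det • ∑ i, ∑ m, ((W y)⁻¹ i m) • fderiv ℝ (fun z => W z m i) y with hK
    have hg : HasFDerivAt (fun z => ((W z).det).re) (Complex.reCLM.comp K) y :=
      (Complex.reCLM.hasFDerivAt).comp y hD
    have hpos := (hdetpos y hy).1
    have hlog : HasDerivAt Real.log (((W y).det).re)⁻¹ (((W y).det).re) :=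
      Real.hasDerivAt_log (ne_of_gt hpos)
    have hf : HasFDerivAt (fun z => Real.log ((W z).det.re))
        ((((W y).det).re)⁻¹ • (Complex.reCLM.comp K)) y :=
      HasDerivAt.comp_hasFDerivAt (f := fun z => ((W z).det).re) y hlog hg
    rw [hf.fderiv]
    have hT : ((W y)⁻¹ * mpderiv W y j).trace
        = ∑ i, ∑ m, (W y)⁻¹ i m * fderiv ℝ (fun z => W z m i) y
            (EuclideanSpace.single j (1:ℝ)) := by
      simp [Matrix.trace, Matrix.diag, Matrix.mul_apply, mpderiv]
    have hKval : K (EuclideanSpace.single j (1:ℝ))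
        = (W y).det * ((W y)⁻¹ * mpderiv W y j).trace := by
      rw [hT, hK]
      simp [ContinuousLinearMap.sum_apply, Finset.mul_sum]
    have him : ((W y).det).im = 0 := (hdetpos y hy).2
    have : (K (EuclideanSpace.single j (1:ℝ))).re
        = ((W y).det).re * (((W y)⁻¹ * mpderiv W y j).trace).re := by
      rw [hKval, Complex.mul_re, him]
      ring
    simp only [ContinuousLinearMap.smul_apply, ContinuousLinearMap.coe_comp',
      Function.comp_apply, Complex.reCLM_apply, smul_eq_mul]
    rw [this, inv_mul_cancel_left₀ (ne_of_gt hpos)]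
  -- key per-direction second derivative formula
  have key : ∀ j : Fin n,
      pderiv2 (fun y => Real.log ((W y).det.re)) x j
      = (-((((W x)⁻¹ * mpderiv W x j) * ((W x)⁻¹ * mpderiv W x j)).trace)
         + ((W x)⁻¹ * Matrix.of fun i k => pderiv2C (fun y => W y i k) x j).trace).re := by
    intro j
    have hEv : (fun y => fderiv ℝ (fun z => Real.log ((W z).det.re)) y
        (EuclideanSpace.single j (1:ℝ)))
        =ᶠ[𝓝 x] fun y => (((W y)⁻¹ * mpderiv W y j).trace).re := by
      filter_upwards [hnhds] with y hy
      exact hlogder y hy j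
    have hstep : pderiv2 (fun y => Real.log ((W y).det.re)) x j
        = fderiv ℝ (fun y => (((W y)⁻¹ * mpderiv W y j).trace).re) x
            (EuclideanSpace.single j (1:ℝ)) := by
      rw [pderiv2, hEv.fderiv_eq]
    have hBdiff : ∀ m i : Fin d, DifferentiableAt ℝ
        (fun y => fderiv ℝ (fun z => W z m i) y (EuclideanSpace.single j (1:ℝ))) x := by
      intro m i
      have h1 : ContDiffAt ℝ 1 (fderiv ℝ (fun z => W z m i)) x :=
        ((hsmooth m i).contDiffAt hnhds).fderiv_right (m := 1) (by exact WithTop.coe_le_coe.2 le_top)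
      exact (h1.differentiableAt one_ne_zero).clm_apply (differentiableAt_const _)
    have hfun : (fun y => ((W y)⁻¹ * mpderiv W y j).trace)
        = fun y => ∑ i, ∑ m, (W y)⁻¹ i m *
            fderiv ℝ (fun z => W z m i) y (EuclideanSpace.single j (1:ℝ)) := by
      funext y
      simp [Matrix.trace, Matrix.diag, Matrix.mul_apply, mpderiv]
    set Φ : EuclideanSpace ℝ (Fin n) →L[ℝ] ℂ :=
      ∑ i, ∑ m, ((W x)⁻¹ i m • fderiv ℝ (fun y => fderiv ℝ (fun z => W z m i) y
            (EuclideanSpace.single j (1:ℝ))) x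
          + (fderiv ℝ (fun z => W z m i) x (EuclideanSpace.single j (1:ℝ))) •
            fderiv ℝ (fun z => (W z)⁻¹ i m) x) with hΦdef
    have hΦ : HasFDerivAt (fun y => ((W y)⁻¹ * mpderiv W y j).trace) Φ x := by
      rw [hfun, hΦdef]
      exact HasFDerivAt.fun_sum fun i _ => HasFDerivAt.fun_sum fun m _ =>
        ((hAdiff x hx i m).hasFDerivAt.mul (hBdiff m i).hasFDerivAt)
    have hre : HasFDerivAt (fun y => (((W y)⁻¹ * mpderiv W y j).trace).re)
        (Complex.reCLM.comp Φ) x := Complex.reCLM.hasFDerivAt.comp x hΦ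
    have hΦval : Φ (EuclideanSpace.single j (1:ℝ))
        = ∑ i, ∑ m, ((W x)⁻¹ i m * pderiv2C (fun y => W y m i) x j
            + mpderiv W x j m i *
              fderiv ℝ (fun z => (W z)⁻¹ i m) x (EuclideanSpace.single j (1:ℝ))) := by
      rw [hΦdef]
      simp [ContinuousLinearMap.sum_apply, pderiv2C, mpderiv, smul_eq_mul]
    -- the derivative of the inverse
    have hid : ∀ i k : Fin d,
        (∑ m, ((W x)⁻¹ i m * mpderiv W x j m k + W x m k *
          fderiv ℝ (fun z => (W z)⁻¹ i m) x (EuclideanSpace.single j (1:ℝ)))) = 0 := by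
      intro i k
      have hconst : (fun y => ∑ m, (W y)⁻¹ i m * W y m k) =ᶠ[𝓝 x]
          fun _ => (1 : Matrix (Fin d) (Fin d) ℂ) i k := by
        filter_upwards [hnhds] with y hy
        rw [← Matrix.mul_apply, Matrix.nonsing_inv_mul _ (hdetne y hy).isUnit]
      have hder : HasFDerivAt (fun y => ∑ m, (W y)⁻¹ i m * W y m k)
          (∑ m, ((W x)⁻¹ i m • fderiv ℝ (fun z => W z m k) x
            + W x m k • fderiv ℝ (fun z => (W z)⁻¹ i m) x)) x :=
        HasFDerivAt.fun_sum fun m _ =>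
          (hAdiff x hx i m).hasFDerivAt.mul (hWdiff x hx m k).hasFDerivAt
      have h0 : fderiv ℝ (fun y => ∑ m, (W y)⁻¹ i m * W y m k) x = 0 := by
        rw [hconst.fderiv_eq]
        exact fderiv_const_apply _
      have heq := hder.fderiv
      rw [h0] at heq
      have happ := congrArg
        (fun (T : EuclideanSpace ℝ (Fin n) →L[ℝ] ℂ) => T (EuclideanSpace.single j (1:ℝ))) heq
      simpa [ContinuousLinearMap.sum_apply, mpderiv, smul_eq_mul] using happ.symm
    set A' : Matrix (Fin d) (Fin d) ℂ :=
      Matrix.of fun i m => fderiv ℝ (fun z => (W z)⁻¹ i m) x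
        (EuclideanSpace.single j (1:ℝ)) with hA'def
    have hA'eq : A' * W x = -((W x)⁻¹ * mpderiv W x j) := by
      ext i k
      simp only [Matrix.mul_apply, Matrix.neg_apply]
      have hcomm : ∑ m, A' i m * W x m k = ∑ m, W x m k * A' i m :=
        Finset.sum_congr rfl fun m _ => mul_comm _ _
      rw [hcomm]
      have h1 : (∑ m, (W x)⁻¹ i m * mpderiv W x j m k)
          + (∑ m, W x m k * A' i m) = 0 := by
        rw [← Finset.sum_add_distrib]
        exact hid i k
      linear_combination h1
    have hA'val : A' = -((W x)⁻¹ * mpderiv W x j * (W x)⁻¹) := by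
      have hu : IsUnit (W x).det := (hdetne x hx).isUnit
      calc A' = A' * (W x * (W x)⁻¹) := by rw [Matrix.mul_nonsing_inv _ hu, mul_one]
        _ = (A' * W x) * (W x)⁻¹ := by rw [mul_assoc]
        _ = -((W x)⁻¹ * mpderiv W x j * (W x)⁻¹) := by rw [hA'eq, neg_mul]
    rw [hstep, hre.fderiv]
    have : (Complex.reCLM.comp Φ) (EuclideanSpace.single j (1:ℝ))
        = (Φ (EuclideanSpace.single j (1:ℝ))).re := rfl
    rw [this]
    congr 1
    rw [hΦval]
    have hsum1 : (∑ i, ∑ m, (W x)⁻¹ i m * pderiv2C (fun y => W y m i) x j)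
        = ((W x)⁻¹ * Matrix.of fun i k => pderiv2C (fun y => W y i k) x j).trace := by
      simp [Matrix.trace, Matrix.diag, Matrix.mul_apply]
    have hsum2 : (∑ i, ∑ m, mpderiv W x j m i *
         fderiv ℝ (fun z => (W z)⁻¹ i m) x (EuclideanSpace.single j (1:ℝ)))
        = (A' * mpderiv W x j).trace := by
      simp only [Matrix.trace, Matrix.diag, Matrix.mul_apply, hA'def, Matrix.of_apply]
      refine Finset.sum_congr rfl fun i _ => Finset.sum_congr rfl fun m _ => mul_comm _ _
    have htr : (A' * mpderiv W x j).trace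
        = -((((W x)⁻¹ * mpderiv W x j) * ((W x)⁻¹ * mpderiv W x j)).trace) := by
      rw [hA'val, neg_mul, Matrix.trace_neg]
      congr 2
      simp [Matrix.mul_assoc]
    rw [Finset.sum_congr rfl fun i (_ : i ∈ Finset.univ) => Finset.sum_add_distrib,
      Finset.sum_add_distrib, hsum1, hsum2, htr]
    ring
  -- assemble
  have hPsum : (∑ j, (Matrix.of fun i k => pderiv2C (fun y => W y i k) x j :
      Matrix (Fin d) (Fin d) ℂ)) = (0 : Matrix (Fin d) (Fin d) ℂ) := by
    ext i k
    rw [Matrix.sum_apply]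
    simpa using hharm x hx i k
  have hs0 : (∑ j, ((W x)⁻¹ *
      Matrix.of fun i k => pderiv2C (fun y => W y i k) x j).trace) = (0 : ℂ) := by
    rw [← Matrix.trace_sum, ← Finset.mul_sum, hPsum, mul_zero, Matrix.trace_zero]
  have hAx : R x * R x = (W x)⁻¹ := (hR x hx).2
  have htr : ∀ j : Fin n,
      (((W x)⁻¹ * mpderiv W x j) * ((W x)⁻¹ * mpderiv W x j)).trace
      = ((R x * mpderiv W x j * R x) * (R x * mpderiv W x j * R x)).trace := by
    intro j
    rw [← hAx]
    simp only [Matrix.mul_assoc]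
    rw [Matrix.trace_mul_comm]
    simp only [Matrix.mul_assoc]
  have hfinal : lap (fun y => Real.log ((W y).det.re)) x
      = ((-∑ j, (((W x)⁻¹ * mpderiv W x j) * ((W x)⁻¹ * mpderiv W x j)).trace)
         + ∑ j, ((W x)⁻¹ *
             Matrix.of fun i k => pderiv2C (fun y => W y i k) x j).trace).re := by
    rw [lap, Finset.sum_congr rfl fun j _ => key j, ← Complex.re_sum]
    congr 1
    rw [Finset.sum_add_distrib]
    congr 1
    exact Finset.sum_neg_distrib _
  rw [hfinal, hs0, add_zero, Complex.neg_re, neg_inj]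
  congr 1
  exact Finset.sum_congr rfl fun j _ => htr j
end
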